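/- Let K be a field and q ∈ K an element that is not a root of unity. In the quantum plane B = B(q), let J = B(a−1) and W = B/J, and for n ≥ 0 let W_n = B·(bⁿ + J). Then for m ≠ n the B-modules W_m and W_n are not isomorphic; that is, the nonzero submodules of W are pairwise non-isomorphic. -/

import Mathlib

noncomputable section

open FreeAlgebra

/-- Defining relation of the quantum plane `B(q)`: `a * b = q • (b * a)`, where
`ι K 0` plays the role of `a` and `ι K 1` plays the role of `b`. -/
inductive QuantumPlaneRel (K : Type) [Field K] (q : K) :
    FreeAlgebra K (Fin 2) → FreeAlgebra K (Fin 2) → Prop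
  | rel : QuantumPlaneRel K q (ι K (0 : Fin 2) * ι K (1 : Fin 2))
      (q • (ι K (1 : Fin 2) * ι K (0 : Fin 2)))

/-- The coordinate algebra of the quantum plane `B(q)`. -/
abbrev QuantumPlane (K : Type) [Field K] (q : K) : Type :=
  RingQuot (QuantumPlaneRel K q)

/-- The generator `a` of the quantum plane. -/
def QuantumPlane.a (K : Type) [Field K] (q : K) : QuantumPlane K q :=
  RingQuot.mkAlgHom K (QuantumPlaneRel K q) (ι K (0 : Fin 2))

/-- The generator `b` of the quantum plane. -/
def QuantumPlane.b (K : Type) [Field K] (q : K) : QuantumPlane K q :=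
  RingQuot.mkAlgHom K (QuantumPlaneRel K q) (ι K (1 : Fin 2))

/-!
The quantum plane `B` acts on `ℕ →₀ K` by letting `a` scale `eₖ` by `qᵏ` and `b` shift `eₖ` to
`eₖ₊₁`. Since `(a - 1) e₀ = 0`, the map `x + J ↦ x e₀` is a `B`-linear map `W → ℕ →₀ K`; it sends
`bⁿ + J` to `eₙ`, and `W_n` into the `B`-submodule of vectors supported in degrees `≥ n`.
The generator `bᵐ + J` of `W_m` is an eigenvector of `a` with eigenvalue `qᵐ`. For `m < n`, as `q`
is not a root of unity, no nonzero vector supported in degrees `≥ n` has this eigenvalue, so every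
`B`-linear map `W_m → W_n` is killed by the map to `ℕ →₀ K`. An isomorphism cannot be, because
`bⁿ + J` lies in its image and is sent to `eₙ ≠ 0`.
-/

theorem AlgHom.le_comap_of_adjoin_eq_top {R A V : Type*} [CommSemiring R] [Semiring A]
    [Algebra R A] [AddCommMonoid V] [Module R V] (ρ : A →ₐ[R] Module.End R V) {s : Set A}
    (hs : Algebra.adjoin R s = ⊤) (p : Submodule R V) (h : ∀ x ∈ s, p ≤ p.comap (ρ x))
    (x : A) : p ≤ p.comap (ρ x) := by
  have hx : x ∈ Algebra.adjoin R s := hs ▸ Algebra.mem_top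
  induction hx using Algebra.adjoin_induction with
  | mem x hx => exact h x hx
  | algebraMap r => intro v hv; simpa using p.smul_mem r hv
  | add x y _ _ hx hy =>
    intro v hv
    rw [Submodule.mem_comap, map_add, LinearMap.add_apply]
    exact add_mem (hx hv) (hy hv)
  | mul x y _ _ hx hy => intro v hv; simpa using hx (hy hv)

theorem pow_ne_pow_of_lt {M : Type*} [MonoidWithZero M] [IsLeftCancelMulZero M] {x : M}
    (hx0 : x ≠ 0) (hx : ∀ k : ℕ, 0 < k → x ^ k ≠ 1) {m n : ℕ} (hmn : m < n) : x ^ n ≠ x ^ m := by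
  intro h
  refine hx (n - m) (Nat.sub_pos_of_lt hmn) (mul_left_cancel₀ (pow_ne_zero m hx0) ?_)
  rw [← pow_add, Nat.add_sub_cancel' hmn.le, h, mul_one]

namespace QuantumPlane

open Finsupp

variable {K : Type} [Field K] {q : K}

theorem a_mul_b : a K q * b K q = q • (b K q * a K q) := by
  simpa only [a, b, map_mul, map_smul] using RingQuot.mkAlgHom_rel K (QuantumPlaneRel.rel (q := q))

theorem a_mul_b_pow (k : ℕ) : a K q * b K q ^ k = q ^ k • (b K q ^ k * a K q) := by
  induction k with
  | zero => simp
  | succ k ih =>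
    rw [pow_succ, ← mul_assoc, ih, smul_mul_assoc, mul_assoc, a_mul_b, mul_smul_comm, smul_smul,
      ← mul_assoc, pow_succ q]

theorem adjoin_a_b : Algebra.adjoin K {a K q, b K q} = ⊤ := by
  have hab : RingQuot.mkAlgHom K (QuantumPlaneRel K q) '' Set.range (FreeAlgebra.ι K) =
      {a K q, b K q} := by
    rw [← Set.range_comp]
    ext x
    simp only [Set.mem_range, Function.comp_apply, Fin.exists_fin_two, Set.mem_insert_iff,
      Set.mem_singleton_iff, a, b, eq_comm]
  rw [← hab, Algebra.adjoin_image, FreeAlgebra.adjoin_range_ι, Algebra.map_top,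
    AlgHom.range_eq_top]
  exact RingQuot.mkAlgHom_surjective K _

variable (q) in
def diagPow : Module.End K (ℕ →₀ K) := Finsupp.lsum K fun k => q ^ k • Finsupp.lsingle k

variable (K) in
def shift : Module.End K (ℕ →₀ K) := Finsupp.lmapDomain K K Nat.succ

@[simp] theorem diagPow_single (k : ℕ) (c : K) : diagPow q (single k c) = q ^ k • single k c := by
  simp [diagPow]

theorem diagPow_apply (w : ℕ →₀ K) (j : ℕ) : diagPow q w j = q ^ j * w j := by
  induction w using Finsupp.induction_linear with
  | zero => simp
  | add f g hf hg => simp [hf, hg, mul_add]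
  | single k c => rcases eq_or_ne k j with rfl | h <;> simp [*]

@[simp] theorem shift_single (k : ℕ) (c : K) : shift K (single k c) = single (k + 1) c := by
  simp [shift]

theorem shift_pow_single (k : ℕ) (c : K) : (shift K ^ k) (single 0 c) = single k c := by
  induction k with
  | zero => rfl
  | succ k ih => rw [pow_succ', Module.End.mul_apply, ih, shift_single]

theorem diagPow_mul_shift : diagPow q * shift K = q • (shift K * diagPow q) := by
  refine Finsupp.lhom_ext fun k c => ?_
  rw [Module.End.mul_apply, LinearMap.smul_apply, Module.End.mul_apply, shift_single,
    diagPow_single, diagPow_single, map_smul, shift_single, smul_smul, pow_succ']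

variable (q) in
def rep : QuantumPlane K q →ₐ[K] Module.End K (ℕ →₀ K) :=
  RingQuot.liftAlgHom K ⟨FreeAlgebra.lift K ![diagPow q, shift K], by
    rintro _ _ ⟨⟩
    simp [diagPow_mul_shift]⟩

@[simp] theorem rep_a : rep q (a K q) = diagPow q := by
  simp [rep, a]

@[simp] theorem rep_b : rep q (b K q) = shift K := by
  simp [rep, b]

theorem supported_Ici_le_comap_rep (n : ℕ) (x : QuantumPlane K q) :
    supported K K (Set.Ici n) ≤ (supported K K (Set.Ici n)).comap (rep q x) := by
  refine AlgHom.le_comap_of_adjoin_eq_top (rep q) adjoin_a_b _ ?_ x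
  rintro _ (rfl | rfl) w hw
  · rw [Submodule.mem_comap, rep_a, mem_supported']
    intro j hj
    rw [diagPow_apply, (mem_supported' K w).1 hw j hj, mul_zero]
  · rw [Submodule.mem_comap, rep_b]
    refine supported_mono ?_ (lmapDomain_supported K K Nat.succ _ ▸ Submodule.mem_map_of_mem hw)
    rintro _ ⟨k, hk, rfl⟩
    exact Nat.le_succ_of_le hk

variable (q) in
abbrev repModule : Module (QuantumPlane K q) (ℕ →₀ K) :=
  Module.compHom _ (rep q).toRingHom

attribute [local instance] repModule

theorem smul_eq_rep (x : QuantumPlane K q) (v : ℕ →₀ K) : x • v = rep q x v := rfl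

theorem algebraMap_smul_eq (c : K) (v : ℕ →₀ K) :
    algebraMap K (QuantumPlane K q) c • v = c • v := by
  rw [smul_eq_rep, AlgHom.commutes, Module.algebraMap_end_apply]

variable (q) in
def supportedIci (n : ℕ) : Submodule (QuantumPlane K q) (ℕ →₀ K) where
  carrier := supported K K (Set.Ici n)
  add_mem' := add_mem
  zero_mem' := zero_mem _
  smul_mem' x _ hv := supported_Ici_le_comap_rep n x hv

theorem eq_zero_of_a_smul_eq (hq0 : q ≠ 0) (hq : ∀ k : ℕ, 0 < k → q ^ k ≠ 1) {m n : ℕ}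
    (hmn : m < n) {v : ℕ →₀ K} (hv : v ∈ supportedIci q n) (h : a K q • v = q ^ m • v) :
    v = 0 := by
  ext j
  by_contra hj
  have hjn : n ≤ j := (mem_supported K v).1 hv (mem_support_iff.2 hj)
  have hqj : q ^ j * v j = q ^ m * v j := by
    simpa only [smul_eq_rep, rep_a, diagPow_apply, Finsupp.smul_apply, smul_eq_mul] using
      DFunLike.congr_fun h j
  exact pow_ne_pow_of_lt hq0 hq (hmn.trans_le hjn) (mul_right_cancel₀ hj hqj)

local notation "J" => (Ideal.span {a K q - 1} : Ideal (QuantumPlane K q))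

local notation "𝒲" n:arg =>
  Submodule.span (QuantumPlane K q) {Submodule.Quotient.mk (p := J) (b K q ^ n)}

theorem a_smul_mk_b_pow (k : ℕ) :
    a K q • Submodule.Quotient.mk (p := J) (b K q ^ k) =
      algebraMap K (QuantumPlane K q) (q ^ k) • Submodule.Quotient.mk (p := J) (b K q ^ k) := by
  rw [← Submodule.Quotient.mk_smul, ← Submodule.Quotient.mk_smul, Submodule.Quotient.eq,
    smul_eq_mul, smul_eq_mul, Ideal.mem_span_singleton']
  refine ⟨q ^ k • b K q ^ k, ?_⟩
  rw [a_mul_b_pow, ← Algebra.smul_def, smul_mul_assoc, mul_sub, mul_one, smul_sub]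

variable (q) in
def toFinsupp : (QuantumPlane K q ⧸ J) →ₗ[QuantumPlane K q] (ℕ →₀ K) :=
  Submodule.liftQ J (LinearMap.toSpanSingleton _ _ (single 0 1)) <| Ideal.span_le.2 <| by
    rw [Set.singleton_subset_iff, SetLike.mem_coe, LinearMap.mem_ker,
      LinearMap.toSpanSingleton_apply, sub_smul, one_smul, smul_eq_rep, rep_a, diagPow_single,
      pow_zero, one_smul, sub_self]

theorem toFinsupp_mk_b_pow (k : ℕ) :
    toFinsupp q (Submodule.Quotient.mk (b K q ^ k)) = single k 1 := by
  rw [toFinsupp, Submodule.liftQ_apply, LinearMap.toSpanSingleton_apply, smul_eq_rep, map_pow,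
    rep_b, shift_pow_single]

theorem map_toFinsupp_span_le (n : ℕ) : (𝒲 n).map (toFinsupp q) ≤ supportedIci q n := by
  rw [Submodule.map_le_iff_le_comap, Submodule.span_singleton_le_iff_mem, Submodule.mem_comap,
    toFinsupp_mk_b_pow]
  exact single_mem_supported K 1 Set.self_mem_Ici

theorem linearMap_eq_zero_of_forall_mem_supportedIci (hq0 : q ≠ 0)
    (hq : ∀ k : ℕ, 0 < k → q ^ k ≠ 1) {m n : ℕ} (hmn : m < n)
    (f : 𝒲 m →ₗ[QuantumPlane K q] (ℕ →₀ K)) (hf : ∀ y, f y ∈ supportedIci q n) : f = 0 := by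
  set u : 𝒲 m := ⟨_, Submodule.mem_span_singleton_self _⟩
  have hau : a K q • u = algebraMap K (QuantumPlane K q) (q ^ m) • u :=
    Subtype.ext (a_smul_mk_b_pow m)
  have hu : f u = 0 := by
    refine eq_zero_of_a_smul_eq hq0 hq hmn (hf u) ?_
    rw [← map_smul, hau, map_smul, algebraMap_smul_eq]
  refine LinearMap.ext fun ⟨y, hy⟩ => ?_
  obtain ⟨r, rfl⟩ := Submodule.mem_span_singleton.1 hy
  change f (r • u) = 0
  rw [map_smul, hu, smul_zero]

theorem isEmpty_linearEquiv_of_lt (hq0 : q ≠ 0) (hq : ∀ k : ℕ, 0 < k → q ^ k ≠ 1) {m n : ℕ}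
    (hmn : m < n) : IsEmpty (𝒲 m ≃ₗ[QuantumPlane K q] 𝒲 n) := by
  refine ⟨fun φ => ?_⟩
  have hzero := linearMap_eq_zero_of_forall_mem_supportedIci hq0 hq hmn
    ((toFinsupp q).comp ((𝒲 n).subtype.comp φ.toLinearMap))
    (fun y => map_toFinsupp_span_le n ⟨_, (φ y).2, rfl⟩)
  have := LinearMap.congr_fun hzero (φ.symm ⟨_, Submodule.mem_span_singleton_self _⟩)
  simp [toFinsupp_mk_b_pow] at this

end QuantumPlane

/-- In the quantum plane `B = B(q)` with `q` not a root of unity, with `J = B(a-1)`,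
`W = B/J` and `W_n = B·(bⁿ + J)`, the modules `W_m` and `W_n` are non-isomorphic for
`m ≠ n`: the nonzero submodules of `W` are pairwise non-isomorphic. -/
theorem quantumPlane_W_submodules_nonisomorphic (K : Type) [Field K] (q : K)
    (hq0 : q ≠ 0) (hq : ∀ k : ℕ, 0 < k → q ^ k ≠ 1) :
    ∀ m n : ℕ, m ≠ n →
      IsEmpty ((Submodule.span (QuantumPlane K q)
          {Submodule.Quotient.mk (p := (Ideal.span {QuantumPlane.a K q - 1} :
            Ideal (QuantumPlane K q))) (QuantumPlane.b K q ^ m)}) ≃ₗ[QuantumPlane K q]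
        (Submodule.span (QuantumPlane K q)
          {Submodule.Quotient.mk (p := (Ideal.span {QuantumPlane.a K q - 1} :
            Ideal (QuantumPlane K q))) (QuantumPlane.b K q ^ n)})) := by
  intro m n hmn
  rcases hmn.lt_or_gt with h | h
  · exact QuantumPlane.isEmpty_linearEquiv_of_lt hq0 hq h
  · exact ⟨fun φ => (QuantumPlane.isEmpty_linearEquiv_of_lt hq0 hq h).false φ.symm⟩

end
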